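/- arXiv:1605.03569 — 2 statements merged into one kernel-verified Lean document; each statement's English description precedes it below -/
import Mathlib

section
/- Let T be a rooted 4-spider (as above) and p a prize assignment such that p(uᵢ) ≤ p(uⱼ) for a level-one vertex uᵢ and a leaf uⱼ (uⱼ not the child of uᵢ). If p' is obtained from p by swapping the prizes of uᵢ and uⱼ, then for every integer budget m, maxp(m,𝟙,p) ≤ maxp(m,𝟙,p'). -/
open Classical in
/-- `maxp n par c p B`: the maximum total prize of a system attack (a rooted
subtree, encoded as a parent-closed set `A` of non-root vertices of the rooted
tree on `Fin (n+1)` with root `0` and parent function `par`; the edge with head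
`v` has cost `c v` and the vertex `v` has prize `p v`) whose total edge-cost is
at most the budget `B`. -/
noncomputable def maxp (n : ℕ) (par : Fin (n+1) → Fin (n+1))
    (c p : Fin (n+1) → ℚ) (B : ℚ) : ℚ :=
  ((((Finset.univ.filter (fun v : Fin (n+1) => v ≠ 0)).powerset).filter
      (fun A => (∀ v ∈ A, par v = 0 ∨ par v ∈ A) ∧ ∑ v ∈ A, c v ≤ B)).image
    (fun A => ∑ v ∈ A, p v)).max.unbotD 0

/-- The multiset of values of `f` over the non-root vertices. -/
def valsNR (n : ℕ) (f : Fin (n+1) → ℚ) : Multiset ℚ :=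
  (Finset.univ.filter (fun v : Fin (n+1) => v ≠ 0)).val.map f

/-- Parent function of the rooted 4-spider: the root `0` has children
`u₁, …, uₖ`, and `u_{k+i}` is the unique child of `uᵢ` for `i ∈ {1,…,n-k}`. -/
def spiderPar (n k : ℕ) : Fin (n+1) → Fin (n+1) :=
  fun v => if h : v.val ≤ k then 0 else ⟨v.val - k, by have := v.isLt; omega⟩

/-! If the attack `A` avoids the leaf `uⱼ`, it collects at least as much under the swapped
prizes, since only `uᵢ` can lose to `uⱼ`. Otherwise its image under the transposition
`(uᵢ uⱼ)` is again an attack of the same cost and collects, under the swapped prizes, exactly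
what `A` collects: `uᵢ` hangs from the root, and `uⱼ` is a leaf whose parent is not `uᵢ`, so
the transposition keeps the attack parent-closed. -/

open Finset

theorem Finset.unbotD_max_image_le_of_forall_exists {ι β : Type*} [LinearOrder β]
    {s : Finset ι} {f g : ι → β} (d : β) (h : ∀ a ∈ s, ∃ b ∈ s, f a ≤ g b) :
    (s.image f).max.unbotD d ≤ (s.image g).max.unbotD d := by
  classical
  rcases s.eq_empty_or_nonempty with rfl | hs
  · simp
  rw [← coe_max' (hs.image f), ← coe_max' (hs.image g), WithBot.unbotD_coe,
    WithBot.unbotD_coe]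
  refine max'_le _ _ _ ?_
  simp only [mem_image, forall_exists_index, and_imp, forall_apply_eq_imp_iff₂]
  intro a ha
  obtain ⟨b, hb, hab⟩ := h a ha
  exact hab.trans (le_max' _ _ (mem_image_of_mem g hb))

section Swap

variable {α : Type*} [DecidableEq α]

theorem sum_le_sum_comp_swap {β : Type*} [AddCommMonoid β] [PartialOrder β]
    [IsOrderedAddMonoid β] {A : Finset α} {p : α → β} {i j : α} (hj : j ∉ A)
    (hij : p i ≤ p j) : ∑ v ∈ A, p v ≤ ∑ v ∈ A, p (Equiv.swap i j v) := by
  refine sum_le_sum fun v hv => ?_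
  rcases eq_or_ne v i with rfl | hvi
  · simpa using hij
  · rw [Equiv.swap_apply_of_ne_of_ne hvi (ne_of_mem_of_not_mem hv hj)]

def IsParentClosed (par : α → α) (r : α) (A : Finset α) : Prop :=
  ∀ v ∈ A, par v = r ∨ par v ∈ A

theorem IsParentClosed.map_swap {par : α → α} {r i j : α} {A : Finset α}
    (hA : IsParentClosed par r A) (hj : j ∈ A) (hi : par i = r) (hleaf : ∀ v, par v ≠ j)
    (hji : par j ≠ i) : IsParentClosed par r (A.map (Equiv.swap i j).toEmbedding) := by
  have mem_map_swap {v : α} : v ∈ A.map (Equiv.swap i j).toEmbedding ↔ Equiv.swap i j v ∈ A :=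
    mem_map_equiv
  intro v hv
  rw [mem_map_swap] at hv
  rcases eq_or_ne v i with rfl | hvi
  · exact Or.inl hi
  rcases eq_or_ne v j with rfl | hvj
  · refine (hA v hj).imp_right fun hpar => mem_map_swap.mpr ?_
    rwa [Equiv.swap_apply_of_ne_of_ne hji (hleaf v)]
  rw [Equiv.swap_apply_of_ne_of_ne hvi hvj] at hv
  refine (hA v hv).imp_right fun hpar => mem_map_swap.mpr ?_
  rcases eq_or_ne (par v) i with hpi | hpi
  · rwa [hpi, Equiv.swap_apply_left]
  · rwa [Equiv.swap_apply_of_ne_of_ne hpi (hleaf v)]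

end Swap

section Attacks

variable {n : ℕ}

open Classical in
noncomputable def attacks (n : ℕ) (par : Fin (n+1) → Fin (n+1)) (c : Fin (n+1) → ℚ) (B : ℚ) :
    Finset (Finset (Fin (n+1))) :=
  ((univ.filter (fun v : Fin (n+1) => v ≠ 0)).powerset).filter
    (fun A => (∀ v ∈ A, par v = 0 ∨ par v ∈ A) ∧ ∑ v ∈ A, c v ≤ B)

theorem maxp_eq_attacks (par : Fin (n+1) → Fin (n+1)) (c p : Fin (n+1) → ℚ) (B : ℚ) :
    maxp n par c p B = ((attacks n par c B).image fun A => ∑ v ∈ A, p v).max.unbotD 0 :=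
  rfl

theorem mem_attacks {par : Fin (n+1) → Fin (n+1)} {c : Fin (n+1) → ℚ} {B : ℚ}
    {A : Finset (Fin (n+1))} :
    A ∈ attacks n par c B ↔ 0 ∉ A ∧ IsParentClosed par 0 A ∧ ∑ v ∈ A, c v ≤ B := by
  simp only [attacks, mem_filter, mem_powerset, subset_iff, mem_univ, true_and,
    IsParentClosed]
  exact and_congr_left' ⟨fun h h0 => h h0 rfl, fun h v hv hv0 => h (hv0 ▸ hv)⟩

theorem maxp_le_maxp_of_forall_exists {par : Fin (n+1) → Fin (n+1)} {c p q : Fin (n+1) → ℚ}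
    {B : ℚ} (h : ∀ A ∈ attacks n par c B, ∃ A' ∈ attacks n par c B,
      ∑ v ∈ A, p v ≤ ∑ v ∈ A', q v) :
    maxp n par c p B ≤ maxp n par c q B := by
  rw [maxp_eq_attacks, maxp_eq_attacks]
  exact unbotD_max_image_le_of_forall_exists 0 h

theorem map_swap_mem_attacks {par : Fin (n+1) → Fin (n+1)} {c : Fin (n+1) → ℚ} {B : ℚ}
    {A : Finset (Fin (n+1))} {i j : Fin (n+1)} (hA : A ∈ attacks n par c B) (hj : j ∈ A)
    (hi0 : i ≠ 0) (hj0 : j ≠ 0) (hi : par i = 0) (hleaf : ∀ v, par v ≠ j) (hji : par j ≠ i)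
    (hc : c i = c j) : A.map (Equiv.swap i j).toEmbedding ∈ attacks n par c B := by
  obtain ⟨h0, hclosed, hcost⟩ := mem_attacks.mp hA
  refine mem_attacks.mpr ⟨?_, hclosed.map_swap hj hi hleaf hji, ?_⟩
  · rwa [mem_map_equiv, Equiv.symm_swap, Equiv.swap_apply_of_ne_of_ne hi0.symm hj0.symm]
  · have hc_swap : ∀ v, c (Equiv.swap i j v) = c v := fun v => by
      rcases eq_or_ne v i with rfl | hvi
      · simp [hc]
      rcases eq_or_ne v j with rfl | hvj
      · simp [hc]
      rw [Equiv.swap_apply_of_ne_of_ne hvi hvj]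
    simpa [sum_map, hc_swap] using hcost

end Attacks

theorem spiderPar_of_le {n k : ℕ} {v : Fin (n+1)} (hv : v.val ≤ k) : spiderPar n k v = 0 :=
  dif_pos hv

theorem spiderPar_val_le {n k : ℕ} (hnk : n ≤ 2 * k) (v : Fin (n+1)) :
    (spiderPar n k v).val ≤ k := by
  unfold spiderPar
  split_ifs
  · simp
  · have := v.isLt
    simp only
    omega

theorem spiderPar_val_of_lt {n k : ℕ} {v : Fin (n+1)} (hv : k < v.val) :
    (spiderPar n k v).val = v.val - k := by
  simp [spiderPar, Nat.not_le.mpr hv]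

theorem stmt15_general (n k : ℕ) (hnk : n ≤ 2 * k)
    (p : Fin (n+1) → ℚ)
    (i j : Fin (n+1)) (hi1 : 1 ≤ i.val) (hik : i.val ≤ k)
    (hjk : k + 1 ≤ j.val)
    (hnotchild : j.val ≠ i.val + k)
    (hpij : p i ≤ p j) (m : ℕ) :
    maxp n (spiderPar n k) (fun _ => 1) p m ≤
      maxp n (spiderPar n k) (fun _ => 1) (p ∘ Equiv.swap i j) m := by
  have hi0 : i ≠ 0 := fun h => by simp [h] at hi1
  have hj0 : j ≠ 0 := fun h => by simp [h] at hjk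
  have hleaf : ∀ v, spiderPar n k v ≠ j := fun v h =>
    absurd (spiderPar_val_le hnk v) (by rw [h]; omega)
  have hji : spiderPar n k j ≠ i := fun h => by
    have hval := spiderPar_val_of_lt (show k < j.val by omega)
    rw [h] at hval
    omega
  apply maxp_le_maxp_of_forall_exists
  intro A hA
  by_cases hjA : j ∈ A
  · refine ⟨_, map_swap_mem_attacks hA hjA hi0 hj0 (spiderPar_of_le hik) hleaf hji rfl, ?_⟩
    simp [sum_map]
  · exact ⟨A, hA, sum_le_sum_comp_swap hjA hpij⟩

/-- On a rooted 4-spider, if `uᵢ` is a level-one vertex, `uⱼ` is a leaf that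
is not the child of `uᵢ`, and `p uᵢ ≤ p uⱼ`, then swapping the prizes of
`uᵢ` and `uⱼ` never decreases the attacker's maximum prize. -/
theorem stmt15 (n k : ℕ) (hnk : n ≤ 2 * k) (hk : k + 2 ≤ n)
    (p : Fin (n+1) → ℚ) (hp : ∀ v, 0 ≤ p v)
    (i j : Fin (n+1)) (hi1 : 1 ≤ i.val) (hik : i.val ≤ k)
    (hjk : k + 1 ≤ j.val) (hjn : j.val ≤ n)
    (hnotchild : j.val ≠ i.val + k)
    (hpij : p i ≤ p j) (m : ℕ) :
    maxp n (spiderPar n k) (fun _ => 1) p m ≤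
      maxp n (spiderPar n k) (fun _ => 1) (p ∘ Equiv.swap i j) m :=
  stmt15_general n k hnk p i j hi1 hik hjk hnotchild hpij m
end

section
/- Let T be a rooted tree on n non-root vertices and let p̃ be a scaled prize vector (entries in [0,1] ∩ ℚ). Then the security system (T, 𝟙, p̃) is optimal for the P-model (T, I, {p̃}) if and only if the security system (T, 𝟙 − p̃, 𝟙) is optimal for the C-model (T, {𝟙 − p̃}, I); here optimality in the P-model quantifies over all prize vectors p̃' with the same underlying multiset as p̃, and optimality in the C-model quantifies over all cost vectors with the same underlying multiset as 𝟙 − p̃. -/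
/-!
Attacks are parent-closed sets of non-root vertices. Because parents precede their children,
any attack can be grown one vertex at a time inside any larger attack, so in both models it
suffices to look at attacks of each exact size `k`. For such an attack the cost under `𝟙 - p`
is `k - p(A)`; hence "some attack of `k` edges has cost at most `B` under `𝟙 - p`" and "some
attack of `k` edges has prize at least `k - B` under `p`" are the same statement, and
optimality transfers between the two models.
-/

open Finset

def IsAttack {n : ℕ} (par : Fin (n+1) → Fin (n+1)) (A : Finset (Fin (n+1))) : Prop :=
  0 ∉ A ∧ ∀ v ∈ A, par v = 0 ∨ par v ∈ A

section Attacks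

variable {n : ℕ} {par : Fin (n+1) → Fin (n+1)} {A C : Finset (Fin (n+1))}

lemma isAttack_empty : IsAttack par ∅ := by simp [IsAttack]

lemma isAttack_univ_erase_zero : IsAttack par (univ.erase 0) :=
  ⟨notMem_erase 0 univ,
    fun _ _ => or_iff_not_imp_left.2 fun h => mem_erase.2 ⟨h, mem_univ _⟩⟩

lemma IsAttack.ne_zero (hA : IsAttack par A) {v : Fin (n+1)} (hv : v ∈ A) : v ≠ 0 :=
  ne_of_mem_of_not_mem hv hA.1

lemma IsAttack.subset_univ_erase_zero (hA : IsAttack par A) : A ⊆ univ.erase 0 :=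
  fun _ hv => mem_erase.2 ⟨hA.ne_zero hv, mem_univ _⟩

lemma IsAttack.card_le (hA : IsAttack par A) : #A ≤ n := by
  simpa using card_le_card hA.subset_univ_erase_zero

/-- The least vertex of `C \ A` can be added to `A`: its parent is smaller, so lies in `A`. -/
lemma IsAttack.exists_insert (hpar : ∀ v : Fin (n+1), v ≠ 0 → (par v).val < v.val)
    (hA : IsAttack par A) (hC : IsAttack par C) (hAC : #A < #C) :
    ∃ v ∈ C \ A, IsAttack par (insert v A) := by
  have hne := sdiff_nonempty_of_card_lt_card hAC
  obtain ⟨hvC, hvA⟩ := mem_sdiff.1 ((C \ A).min'_mem hne)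
  refine ⟨_, mem_sdiff.2 ⟨hvC, hvA⟩, ?_, fun w hw => ?_⟩
  · simpa [hA.1] using (hC.ne_zero hvC).symm
  rcases mem_insert.1 hw with rfl | hwA
  · refine (hC.2 _ hvC).imp_right fun hparC => mem_insert_of_mem ?_
    by_contra hparA
    exact absurd ((C \ A).min'_le _ (mem_sdiff.2 ⟨hparC, hparA⟩))
      (not_le.2 (hpar _ (hC.ne_zero hvC)))
  · exact (hA.2 w hwA).imp_right (mem_insert_of_mem)

lemma exists_isAttack_card_eq_of_subset
    (hpar : ∀ v : Fin (n+1), v ≠ 0 → (par v).val < v.val)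
    (hA : IsAttack par A) (hC : IsAttack par C) (hAC : A ⊆ C) {k : ℕ}
    (hAk : #A ≤ k) (hkC : k ≤ #C) :
    ∃ D, A ⊆ D ∧ D ⊆ C ∧ IsAttack par D ∧ #D = k := by
  induction k, hAk using Nat.le_induction with
  | base => exact ⟨A, subset_rfl, hAC, hA, rfl⟩
  | succ k _ ih =>
    obtain ⟨D, hAD, hDC, hD, rfl⟩ := ih (by omega)
    obtain ⟨v, hv, hvD⟩ := hD.exists_insert hpar hC (by omega)
    obtain ⟨hvC, hvD'⟩ := mem_sdiff.1 hv
    exact ⟨insert v D, hAD.trans (subset_insert _ _), insert_subset hvC hDC, hvD,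
      card_insert_of_notMem hvD'⟩

end Attacks

section MaxPrize

variable {n : ℕ} {par : Fin (n+1) → Fin (n+1)} {c p : Fin (n+1) → ℚ} {B : ℚ}
  {A : Finset (Fin (n+1))}

lemma isGreatest_maxp (hB : 0 ≤ B) :
    IsGreatest {x | ∃ A, IsAttack par A ∧ ∑ v ∈ A, c v ≤ B ∧ ∑ v ∈ A, p v = x}
      (maxp n par c p B) := by
  classical
  set S := ((((univ.filter (fun v : Fin (n+1) => v ≠ 0)).powerset).filter
      (fun A => (∀ v ∈ A, par v = 0 ∨ par v ∈ A) ∧ ∑ v ∈ A, c v ≤ B)).image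
    (fun A => ∑ v ∈ A, p v))
  have hS : (S : Set ℚ) =
      {x | ∃ A, IsAttack par A ∧ ∑ v ∈ A, c v ≤ B ∧ ∑ v ∈ A, p v = x} := by
    ext x
    simp only [S, coe_image, coe_filter, mem_powerset, Set.mem_image, Set.mem_ofPred_eq,
      IsAttack, subset_iff, mem_filter, mem_univ, true_and, and_assoc]
    exact exists_congr fun A =>
      and_congr_left' ⟨fun h h0 => h h0 rfl, fun h _ hv hv0 => h (hv0 ▸ hv)⟩
  have hne : S.Nonempty := by
    rw [← coe_nonempty, hS]
    exact ⟨0, ∅, isAttack_empty, by simpa using hB, by simp⟩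
  have hmax : maxp n par c p B = S.max' hne := by
    rw [maxp, ← coe_max' hne, WithBot.unbotD_coe]
  rw [hmax, ← hS]
  exact isGreatest_max' S hne

lemma le_maxp (hB : 0 ≤ B) (hA : IsAttack par A) (hAB : ∑ v ∈ A, c v ≤ B) :
    ∑ v ∈ A, p v ≤ maxp n par c p B :=
  (isGreatest_maxp hB).2 ⟨A, hA, hAB, rfl⟩

lemma exists_isAttack_sum_eq_maxp (hB : 0 ≤ B) :
    ∃ A, IsAttack par A ∧ ∑ v ∈ A, c v ≤ B ∧ ∑ v ∈ A, p v = maxp n par c p B :=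
  (isGreatest_maxp hB).1

lemma maxp_mono {B' : ℚ} (hB : 0 ≤ B) (hBB' : B ≤ B') :
    maxp n par c p B ≤ maxp n par c p B' := by
  obtain ⟨A, hA, hAB, hAp⟩ := exists_isAttack_sum_eq_maxp (par := par) (c := c) (p := p) hB
  exact hAp ▸ le_maxp (hB.trans hBB') hA (hAB.trans hBB')

/-- With nonnegative costs an optimal attack can be pruned to any smaller number of edges. -/
lemma natCast_le_maxp_iff (hpar : ∀ v : Fin (n+1), v ≠ 0 → (par v).val < v.val)
    (hc : ∀ v ≠ 0, 0 ≤ c v) (hB : 0 ≤ B) (k : ℕ) :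
    (k : ℚ) ≤ maxp n par c (fun _ => 1) B ↔
      ∃ A, IsAttack par A ∧ #A = k ∧ ∑ v ∈ A, c v ≤ B := by
  constructor
  · intro hk
    obtain ⟨A, hA, hAB, hAcard⟩ :=
      exists_isAttack_sum_eq_maxp (par := par) (c := c) (p := fun _ => 1) hB
    have hkA : k ≤ #A := by
      simp only [sum_const, nsmul_one] at hAcard
      exact_mod_cast hAcard ▸ hk
    obtain ⟨D, -, hDA, hD, hDk⟩ := exists_isAttack_card_eq_of_subset hpar isAttack_empty hA
      (empty_subset A) (Nat.zero_le k) hkA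
    exact ⟨D, hD, hDk,
      (sum_le_sum_of_subset_of_nonneg hDA fun v hv _ => hc v (hA.ne_zero hv)).trans hAB⟩
  · rintro ⟨A, hA, rfl, hAB⟩
    simpa using le_maxp (p := fun _ => 1) hB hA hAB

/-- With nonnegative prizes an optimal attack can be grown to use the whole budget of edges. -/
lemma le_maxp_one_iff (hpar : ∀ v : Fin (n+1), v ≠ 0 → (par v).val < v.val)
    (hp : ∀ v ≠ 0, 0 ≤ p v) {k : ℕ} (hk : k ≤ n) (x : ℚ) :
    x ≤ maxp n par (fun _ => 1) p k ↔
      ∃ A, IsAttack par A ∧ #A = k ∧ x ≤ ∑ v ∈ A, p v := by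
  constructor
  · intro hx
    obtain ⟨A, hA, hAk, hAp⟩ :=
      exists_isAttack_sum_eq_maxp (par := par) (c := fun _ => 1) (p := p) (Nat.cast_nonneg k)
    have hAk' : #A ≤ k := by
      simp only [sum_const, nsmul_one] at hAk
      exact_mod_cast hAk
    obtain ⟨D, hAD, -, hD, hDk⟩ := exists_isAttack_card_eq_of_subset hpar hA
      isAttack_univ_erase_zero hA.subset_univ_erase_zero hAk' (by simpa using hk)
    refine ⟨D, hD, hDk, hx.trans (hAp ▸ ?_)⟩
    exact sum_le_sum_of_subset_of_nonneg hAD fun v hv _ => hp v (hD.ne_zero hv)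
  · rintro ⟨A, hA, rfl, hx⟩
    exact hx.trans (le_maxp (Nat.cast_nonneg _) hA (by simp))

lemma natCast_le_maxp_one_sub_iff (hpar : ∀ v : Fin (n+1), v ≠ 0 → (par v).val < v.val)
    (hp : ∀ v ≠ 0, 0 ≤ p v ∧ p v ≤ 1) (hB : 0 ≤ B) {k : ℕ} (hk : k ≤ n) :
    (k : ℚ) ≤ maxp n par (fun v => 1 - p v) (fun _ => 1) B ↔
      k - B ≤ maxp n par (fun _ => 1) p k := by
  rw [natCast_le_maxp_iff hpar (fun v hv => sub_nonneg.2 (hp v hv).2) hB,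
    le_maxp_one_iff hpar (fun v hv => (hp v hv).1) hk]
  refine exists_congr fun A => and_congr_right fun _ => and_congr_right fun hAk => ?_
  rw [sum_sub_distrib, sum_const, nsmul_one, hAk]
  constructor <;> intro <;> linarith

end MaxPrize

section Rearrangement

variable {n : ℕ} {f g : Fin (n+1) → ℚ}

lemma valsNR_one_sub (f : Fin (n+1) → ℚ) :
    valsNR n (fun v => 1 - f v) = (valsNR n f).map (1 - ·) := by
  simp [valsNR, Multiset.map_map]

lemma forall_ne_zero_of_valsNR_eq (h : valsNR n f = valsNR n g) {P : ℚ → Prop}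
    (hg : ∀ v ≠ 0, P (g v)) : ∀ v ≠ 0, P (f v) := by
  intro v hv
  have hfv : f v ∈ valsNR n g := h ▸ Multiset.mem_map_of_mem f (by simpa using hv)
  obtain ⟨w, hw, hwv⟩ := Multiset.mem_map.1 hfv
  exact hwv ▸ hg w (by simpa using hw)

end Rearrangement

/-- Duality: for a scaled prize vector `p̃`, the security system `(T,𝟙,p̃)`
is optimal for the P-model if and only if the dual security system
`(T,𝟙-p̃,𝟙)` is optimal for the C-model. -/
theorem stmt19 (n : ℕ) (par : Fin (n+1) → Fin (n+1))
    (hpar : ∀ v : Fin (n+1), v ≠ 0 → (par v).val < v.val)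
    (p : Fin (n+1) → ℚ) (hscaled : ∀ v, 0 ≤ p v ∧ p v ≤ 1) :
    (∀ m : ℕ, ∀ p' : Fin (n+1) → ℚ, valsNR n p' = valsNR n p →
        maxp n par (fun _ => 1) p m ≤ maxp n par (fun _ => 1) p' m) ↔
      (∀ B : ℚ, 0 ≤ B → ∀ c' : Fin (n+1) → ℚ,
        valsNR n c' = valsNR n (fun v => 1 - p v) →
        maxp n par (fun v => 1 - p v) (fun _ => 1) B ≤
          maxp n par c' (fun _ => 1) B) := by
  have hp : ∀ v ≠ 0, 0 ≤ p v ∧ p v ≤ 1 := fun v _ => hscaled v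
  have hbounds (q : Fin (n+1) → ℚ) (hq : valsNR n q = valsNR n p) :
      ∀ v ≠ 0, 0 ≤ q v ∧ q v ≤ 1 :=
    forall_ne_zero_of_valsNR_eq (P := fun x => 0 ≤ x ∧ x ≤ 1) hq hp
  constructor
  · intro hopt B hB c' hc'
    set p' : Fin (n+1) → ℚ := fun v => 1 - c' v
    have hp'vals : valsNR n p' = valsNR n p := by
      simp [p', valsNR_one_sub, hc', Multiset.map_map]
    have hc'p' : c' = fun v => 1 - p' v := by simp [p']
    obtain ⟨A, hA, -, hAval⟩ := exists_isAttack_sum_eq_maxp (par := par)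
      (c := fun v => 1 - p v) (p := fun _ => 1) hB
    simp only [sum_const, nsmul_one] at hAval
    rw [← hAval, hc'p', natCast_le_maxp_one_sub_iff hpar (hbounds p' hp'vals) hB hA.card_le]
    exact ((natCast_le_maxp_one_sub_iff hpar hp hB hA.card_le).1 hAval.le).trans
      (hopt _ p' hp'vals)
  · intro hopt m p' hp'vals
    have hp' := hbounds p' hp'vals
    obtain ⟨A, hA, hAm, hAp⟩ := exists_isAttack_sum_eq_maxp (par := par)
      (c := fun _ => 1) (p := p) (Nat.cast_nonneg m)
    simp only [sum_const, nsmul_one, Nat.cast_le] at hAm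
    -- `B` is the cost of the optimal P-attack `A` under `𝟙 - p`.
    set B := (#A : ℚ) - ∑ v ∈ A, p v
    have hB : 0 ≤ B :=
      sub_nonneg.2 (by simpa using sum_le_card_nsmul A p 1 fun v _ => (hscaled v).2)
    have hCval : (#A : ℚ) ≤ maxp n par (fun v => 1 - p' v) (fun _ => 1) B :=
      ((natCast_le_maxp_one_sub_iff hpar hp hB hA.card_le).2
        (by simpa [B] using le_maxp (Nat.cast_nonneg _) hA (by simp))).trans
        (hopt B hB _ (by rw [valsNR_one_sub, valsNR_one_sub, hp'vals]))
    calc maxp n par (fun _ => 1) p m = #A - B := by rw [← hAp]; ring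
      _ ≤ maxp n par (fun _ => 1) p' #A :=
          (natCast_le_maxp_one_sub_iff hpar hp' hB hA.card_le).1 hCval
      _ ≤ maxp n par (fun _ => 1) p' m := maxp_mono (Nat.cast_nonneg _) (by exact_mod_cast hAm)
end
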